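/- arXiv:1410.2513 — 2 statements merged into one kernel-verified Lean document; each statement's English description precedes it below -/
import Mathlib

section
/- There are no minimal surfaces in Sol₃ foliated by arcs of circles in the horizontal planes z = const. Precisely: let I, J ⊆ ℝ be nonempty open intervals and let a, b, r : I → ℝ be twice continuously differentiable with r(s) > 0 for all s ∈ I, and define X : I × J → ℝ³ by X(s,t) = (a(s) + r(s)·e^{−s}·cos t, b(s) + r(s)·e^{s}·sin t, s). Then X does not have zero mean curvature, i.e. it is NOT the case that for every (s,t) ∈ I × J and every n ∈ ℝ³ with g_X(n, X_s) = g_X(n, X_t) = 0 one has E·g_X(S_tt, n) − 2F·g_X(S_st, n) + G·g_X(S_ss, n) = 0. -/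
open Real

noncomputable section

/-- Tangent/ambient vectors of Sol₃ modeled on ℝ³. -/
abbrev V3 : Type := ℝ × ℝ × ℝ

/-- The Sol₃ metric at a point `p = (x,y,z)`:
`g_p(u,v) = e^{2z}u₁v₁ + e^{-2z}u₂v₂ + u₃v₃`. -/
def gSol (p u v : V3) : ℝ :=
  exp (2 * p.2.2) * u.1 * v.1 + exp (-(2 * p.2.2)) * u.2.1 * v.2.1 + u.2.2 * v.2.2

/-- The Christoffel bilinear map of the Sol₃ metric at a point `p`. -/
def GammaSol (p u v : V3) : V3 :=
  (u.1 * v.2.2 + u.2.2 * v.1,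
   -(u.2.1 * v.2.2 + u.2.2 * v.2.1),
   -exp (2 * p.2.2) * u.1 * v.1 + exp (-(2 * p.2.2)) * u.2.1 * v.2.1)

/-- Partial derivative of a parametrized surface with respect to the first parameter. -/
def pXs (X : ℝ → ℝ → V3) (s t : ℝ) : V3 := deriv (fun s' => X s' t) s

/-- Partial derivative of a parametrized surface with respect to the second parameter. -/
def pXt (X : ℝ → ℝ → V3) (s t : ℝ) : V3 := deriv (fun t' => X s t') t

/-- Ambient second-order quantity `S_ss = X_ss + Γ_X(X_s, X_s)`. -/
def Sss (X : ℝ → ℝ → V3) (s t : ℝ) : V3 :=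
  deriv (fun s' => pXs X s' t) s + GammaSol (X s t) (pXs X s t) (pXs X s t)

/-- Ambient second-order quantity `S_st = X_st + Γ_X(X_s, X_t)`. -/
def Sst (X : ℝ → ℝ → V3) (s t : ℝ) : V3 :=
  deriv (fun t' => pXs X s t') t + GammaSol (X s t) (pXs X s t) (pXt X s t)

/-- Ambient second-order quantity `S_tt = X_tt + Γ_X(X_t, X_t)`. -/
def Stt (X : ℝ → ℝ → V3) (s t : ℝ) : V3 :=
  deriv (fun t' => pXt X s t') t + GammaSol (X s t) (pXt X s t) (pXt X s t)

/-- `X : I × J → Sol₃` has zero mean curvature: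
for every point of `I × J` and every normal vector `n`,
`E·g(S_tt,n) - 2F·g(S_st,n) + G·g(S_ss,n) = 0`. -/
def MeanZero (I J : Set ℝ) (X : ℝ → ℝ → V3) : Prop :=
  ∀ s ∈ I, ∀ t ∈ J, ∀ n : V3,
    gSol (X s t) n (pXs X s t) = 0 → gSol (X s t) n (pXt X s t) = 0 →
    gSol (X s t) (pXs X s t) (pXs X s t) * gSol (X s t) (Stt X s t) n
      - 2 * gSol (X s t) (pXs X s t) (pXt X s t) * gSol (X s t) (Sst X s t) n
      + gSol (X s t) (pXt X s t) (pXt X s t) * gSol (X s t) (Sss X s t) n = 0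

/-- `X : I × J → Sol₃` has zero Gaussian curvature:
for every point of `I × J` and every normal vector `n`,
`g(S_ss,n)·g(S_tt,n) - g(S_st,n)² = 0`. -/
def GaussZero (I J : Set ℝ) (X : ℝ → ℝ → V3) : Prop :=
  ∀ s ∈ I, ∀ t ∈ J, ∀ n : V3,
    gSol (X s t) n (pXs X s t) = 0 → gSol (X s t) n (pXt X s t) = 0 →
    gSol (X s t) (Sss X s t) n * gSol (X s t) (Stt X s t) n
      - (gSol (X s t) (Sst X s t) n) ^ 2 = 0

/-! On each leaf `z = s` there is an explicit normal field `horizontalCyclicNormal` along the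
circle, and the mean-curvature form evaluated on it is a trigonometric polynomial in `t` whose
`sin t ^ 4` coefficient is `4 r(s)³`. Minimality makes this polynomial vanish on the open set `J`,
hence everywhere by analyticity. Averaging over `t ↦ -t, π - t, t - π` leaves
`A + B x + C x²` with `x = sin t ^ 2`, and its values at `x = 0, 1/2, 1` force `C = 0`, i.e.
`r(s) = 0`. -/

open Filter Topology

lemma sin_pow_four_coeff_eq_zero {A B C D E F G : ℝ}
    (h : ∀ t, A + B * sin t ^ 2 + C * sin t ^ 4 + sin t * (D + E * sin t ^ 2)
      + cos t * (F + G * sin t ^ 2) = 0) : C = 0 := by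
  have heven : ∀ t, A + B * sin t ^ 2 + C * sin t ^ 4 = 0 := by
    intro t
    have h₁ := h (-t)
    have h₂ := h (π - t)
    have h₃ := h (t - π)
    simp only [sin_neg, cos_neg, sin_pi_sub, cos_pi_sub, sin_sub_pi, cos_sub_pi] at h₁ h₂ h₃
    linear_combination (h t + h₁ + h₂ + h₃) / 4
  have h₀ := heven 0
  have h₁ := heven (π / 4)
  have h₂ := heven (π / 2)
  simp only [sin_zero, sin_pi_div_two, sin_pi_div_four] at h₀ h₁ h₂
  have hsq : (√2 / 2) ^ 2 = 1 / 2 := by rw [div_pow, sq_sqrt zero_le_two]; norm_num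
  rw [show 4 = 2 * 2 from rfl, pow_mul, hsq] at h₁
  linear_combination 2 * h₀ + 2 * h₂ - 4 * h₁

lemma sin_pow_four_coeff_eq_zero_of_isOpen {A B C D E F G : ℝ} {J : Set ℝ} (hJ : IsOpen J)
    (hJne : J.Nonempty)
    (h : ∀ t ∈ J, A + B * sin t ^ 2 + C * sin t ^ 4 + sin t * (D + E * sin t ^ 2)
      + cos t * (F + G * sin t ^ 2) = 0) : C = 0 := by
  obtain ⟨t₀, ht₀⟩ := hJne
  have hana : AnalyticOnNhd ℝ (fun t => A + B * sin t ^ 2 + C * sin t ^ 4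
      + sin t * (D + E * sin t ^ 2) + cos t * (F + G * sin t ^ 2)) Set.univ :=
    fun _ _ => by fun_prop
  refine sin_pow_four_coeff_eq_zero (A := A) (B := B) (D := D) (E := E) (F := F) (G := G)
    fun t => ?_
  exact hana.eqOn_zero_of_preconnected_of_eventuallyEq_zero isPreconnected_univ
    (Set.mem_univ t₀) (eventually_of_mem (hJ.mem_nhds ht₀) h) (Set.mem_univ t)

def horizontalCyclicSurface (a b r : ℝ → ℝ) (s t : ℝ) : V3 :=
  (a s + r s * exp (-s) * cos t, b s + r s * exp s * sin t, s)

/-- The first two components make it `g`-orthogonal to `X_t`; the third then makes it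
`g`-orthogonal to `X_s`. -/
def horizontalCyclicNormal (a b r : ℝ → ℝ) (s t : ℝ) : V3 :=
  (exp (-s) * cos t, exp s * sin t,
    -(exp s * deriv a s * cos t + exp (-s) * deriv b s * sin t + deriv r s
      + r s * (sin t ^ 2 - cos t ^ 2)))

lemma exp_mul_exp_neg (s : ℝ) : exp s * exp (-s) = 1 := by
  rw [← exp_add, add_neg_cancel, exp_zero]

def meanCurvatureForm (X : ℝ → ℝ → V3) (s t : ℝ) (n : V3) : ℝ :=
  gSol (X s t) (pXs X s t) (pXs X s t) * gSol (X s t) (Stt X s t) n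
    - 2 * gSol (X s t) (pXs X s t) (pXt X s t) * gSol (X s t) (Sst X s t) n
    + gSol (X s t) (pXt X s t) (pXt X s t) * gSol (X s t) (Sss X s t) n

section
variable {a b r : ℝ → ℝ} {s : ℝ}

lemma pXs_horizontalCyclicSurface (ha : DifferentiableAt ℝ a s) (hb : DifferentiableAt ℝ b s)
    (hr : DifferentiableAt ℝ r s) (t : ℝ) :
    pXs (horizontalCyclicSurface a b r) s t =
      (deriv a s + (deriv r s - r s) * exp (-s) * cos t,
        deriv b s + (deriv r s + r s) * exp s * sin t, 1) := by
  have h₁ := ha.hasDerivAt.add ((hr.hasDerivAt.mul (hasDerivAt_neg s).exp).mul_const (cos t))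
  have h₂ := hb.hasDerivAt.add ((hr.hasDerivAt.mul (hasDerivAt_exp s)).mul_const (sin t))
  refine ((h₁.prodMk (h₂.prodMk (hasDerivAt_id s))).congr_deriv ?_).deriv
  ext <;> simp only <;> ring

lemma pXt_horizontalCyclicSurface (t : ℝ) :
    pXt (horizontalCyclicSurface a b r) s t =
      (-(r s * exp (-s) * sin t), r s * exp s * cos t, 0) := by
  have h₁ := ((hasDerivAt_cos t).const_mul (r s * exp (-s))).const_add (a s)
  have h₂ := ((hasDerivAt_sin t).const_mul (r s * exp s)).const_add (b s)
  exact ((h₁.prodMk (h₂.prodMk (hasDerivAt_const t s))).congr_deriv (by simp only [mul_neg])).deriv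

lemma deriv_pXs_horizontalCyclicSurface_s (ha : ContDiffAt ℝ 2 a s) (hb : ContDiffAt ℝ 2 b s)
    (hr : ContDiffAt ℝ 2 r s) (t : ℝ) :
    deriv (fun s' => pXs (horizontalCyclicSurface a b r) s' t) s =
      (deriv (deriv a) s + (deriv (deriv r) s - 2 * deriv r s + r s) * exp (-s) * cos t,
        deriv (deriv b) s + (deriv (deriv r) s + 2 * deriv r s + r s) * exp s * sin t, 0) := by
  have hdiff : ∀ {f : ℝ → ℝ}, ContDiffAt ℝ 2 f s → ∀ᶠ s' in 𝓝 s, DifferentiableAt ℝ f s' :=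
    fun hf => (hf.eventually (by simp)).mono fun _ h => h.differentiableAt two_ne_zero
  have hdiff_deriv : ∀ {f : ℝ → ℝ}, ContDiffAt ℝ 2 f s → DifferentiableAt ℝ (deriv f) s :=
    fun hf => (hf.derivWithin (m := 1) le_rfl).differentiableAt one_ne_zero
  have hpXs : (fun s' => pXs (horizontalCyclicSurface a b r) s' t) =ᶠ[𝓝 s] fun s' =>
      (deriv a s' + (deriv r s' - r s') * exp (-s') * cos t,
        deriv b s' + (deriv r s' + r s') * exp s' * sin t, (1 : ℝ)) := by
    filter_upwards [hdiff ha, hdiff hb, hdiff hr] with s' ha' hb' hr'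
    exact pXs_horizontalCyclicSurface ha' hb' hr' t
  rw [hpXs.deriv_eq]
  have h₁ := (hdiff_deriv ha).hasDerivAt.add ((((hdiff_deriv hr).hasDerivAt.sub
    (hr.differentiableAt two_ne_zero).hasDerivAt).mul (hasDerivAt_neg s).exp).mul_const (cos t))
  have h₂ := (hdiff_deriv hb).hasDerivAt.add ((((hdiff_deriv hr).hasDerivAt.add
    (hr.differentiableAt two_ne_zero).hasDerivAt).mul (hasDerivAt_exp s)).mul_const (sin t))
  refine ((h₁.prodMk (h₂.prodMk (hasDerivAt_const s (1 : ℝ)))).congr_deriv ?_).deriv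
  ext <;> simp only [Pi.add_apply, Pi.sub_apply] <;> ring

lemma deriv_pXs_horizontalCyclicSurface_t (ha : DifferentiableAt ℝ a s)
    (hb : DifferentiableAt ℝ b s) (hr : DifferentiableAt ℝ r s) (t : ℝ) :
    deriv (fun t' => pXs (horizontalCyclicSurface a b r) s t') t =
      (-((deriv r s - r s) * exp (-s) * sin t), (deriv r s + r s) * exp s * cos t, 0) := by
  simp_rw [pXs_horizontalCyclicSurface ha hb hr]
  have h₁ := ((hasDerivAt_cos t).const_mul ((deriv r s - r s) * exp (-s))).const_add (deriv a s)
  have h₂ := ((hasDerivAt_sin t).const_mul ((deriv r s + r s) * exp s)).const_add (deriv b s)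
  exact ((h₁.prodMk (h₂.prodMk (hasDerivAt_const t (1 : ℝ)))).congr_deriv
    (by simp only [mul_neg])).deriv

lemma deriv_pXt_horizontalCyclicSurface_t (t : ℝ) :
    deriv (fun t' => pXt (horizontalCyclicSurface a b r) s t') t =
      (-(r s * exp (-s) * cos t), -(r s * exp s * sin t), 0) := by
  simp_rw [pXt_horizontalCyclicSurface]
  have h₁ := ((hasDerivAt_sin t).const_mul (r s * exp (-s))).neg
  have h₂ := (hasDerivAt_cos t).const_mul (r s * exp s)
  exact ((h₁.prodMk (h₂.prodMk (hasDerivAt_const t (0 : ℝ)))).congr_deriv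
    (by simp only [mul_neg])).deriv

lemma gSol_horizontalCyclicNormal_pXs (ha : DifferentiableAt ℝ a s) (hb : DifferentiableAt ℝ b s)
    (hr : DifferentiableAt ℝ r s) (t : ℝ) :
    gSol (horizontalCyclicSurface a b r s t) (horizontalCyclicNormal a b r s t)
      (pXs (horizontalCyclicSurface a b r) s t) = 0 := by
  rw [pXs_horizontalCyclicSurface ha hb hr]
  simp only [gSol, horizontalCyclicSurface, horizontalCyclicNormal, two_mul s, neg_add, exp_add]
  grind [exp_mul_exp_neg, cos_sq_add_sin_sq]

lemma gSol_horizontalCyclicNormal_pXt (t : ℝ) :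
    gSol (horizontalCyclicSurface a b r s t) (horizontalCyclicNormal a b r s t)
      (pXt (horizontalCyclicSurface a b r) s t) = 0 := by
  rw [pXt_horizontalCyclicSurface]
  simp only [gSol, horizontalCyclicSurface, horizontalCyclicNormal, two_mul s, neg_add, exp_add]
  grind [exp_mul_exp_neg]

lemma meanCurvatureForm_horizontalCyclicNormal (ha : ContDiffAt ℝ 2 a s)
    (hb : ContDiffAt ℝ 2 b s) (hr : ContDiffAt ℝ 2 r s) :
    ∃ A B D E F G : ℝ, ∀ t, meanCurvatureForm (horizontalCyclicSurface a b r) s t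
      (horizontalCyclicNormal a b r s t) = A + B * sin t ^ 2 + 4 * r s ^ 3 * sin t ^ 4
        + sin t * (D + E * sin t ^ 2) + cos t * (F + G * sin t ^ 2) := by
  have ha' := ha.differentiableAt two_ne_zero
  have hb' := hb.differentiableAt two_ne_zero
  have hr' := hr.differentiableAt two_ne_zero
  refine ⟨-r s - r s * deriv r s ^ 2 + r s ^ 2 * deriv (deriv r) s + r s ^ 2 * deriv r s - r s ^ 3
      - deriv b s ^ 2 * r s * exp (-s) ^ 2 - deriv a s ^ 2 * r s * exp s ^ 2,
    -2 * r s ^ 2 * deriv r s - 4 * r s ^ 3,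
    (deriv (deriv b) s * r s ^ 2 - 2 * deriv b s * r s * deriv r s - 5 * deriv b s * r s ^ 2)
      * exp (-s),
    2 * deriv b s * r s ^ 2 * exp (-s),
    (deriv (deriv a) s * r s ^ 2 - 2 * deriv a s * r s * deriv r s + 3 * deriv a s * r s ^ 2)
      * exp s,
    2 * deriv a s * r s ^ 2 * exp s, fun t => ?_⟩
  simp only [meanCurvatureForm, Sss, Sst, Stt, deriv_pXs_horizontalCyclicSurface_s ha hb hr,
    deriv_pXs_horizontalCyclicSurface_t ha' hb' hr', deriv_pXt_horizontalCyclicSurface_t]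
  simp only [pXs_horizontalCyclicSurface ha' hb' hr', pXt_horizontalCyclicSurface]
  simp only [gSol, GammaSol, horizontalCyclicSurface, horizontalCyclicNormal, Prod.fst_add,
    Prod.snd_add, two_mul s, neg_add, exp_add]
  grind [exp_mul_exp_neg, cos_sq_add_sin_sq]

end

theorem no_minimal_cyclic_surfaces_horizontal_general
    (I J : Set ℝ) (hIo : IsOpen I) (hIne : I.Nonempty)
    (hJo : IsOpen J) (hJne : J.Nonempty)
    (a b r : ℝ → ℝ)
    (ha : ContDiffOn ℝ 2 a I) (hb : ContDiffOn ℝ 2 b I) (hr : ContDiffOn ℝ 2 r I)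
    (hrpos : ∀ s ∈ I, 0 < r s) :
    ¬ MeanZero I J
      (fun s t => (a s + r s * exp (-s) * cos t, b s + r s * exp s * sin t, s)) := by
  show ¬ MeanZero I J (horizontalCyclicSurface a b r)
  intro hmin
  obtain ⟨s, hs⟩ := hIne
  have hsI := hIo.mem_nhds hs
  have ha' := ha.contDiffAt hsI
  have hb' := hb.contDiffAt hsI
  have hr' := hr.contDiffAt hsI
  obtain ⟨A, B, D, E, F, G, hform⟩ := meanCurvatureForm_horizontalCyclicNormal ha' hb' hr'
  have hnormal t := gSol_horizontalCyclicNormal_pXs (ha'.differentiableAt two_ne_zero)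
    (hb'.differentiableAt two_ne_zero) (hr'.differentiableAt two_ne_zero) t
  have hcoeff : 4 * r s ^ 3 = 0 := sin_pow_four_coeff_eq_zero_of_isOpen hJo hJne fun t ht =>
    (hform t).symm.trans (hmin s hs t ht _ (hnormal t) (gSol_horizontalCyclicNormal_pXt t))
  linarith [pow_pos (hrpos s hs) 3]

/-- There are no minimal surfaces in Sol₃ foliated by arcs of circles
in the horizontal planes `z = const`. -/
theorem no_minimal_cyclic_surfaces_horizontal
    (I J : Set ℝ) (hIo : IsOpen I) (hIne : I.Nonempty) (hIc : I.OrdConnected)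
    (hJo : IsOpen J) (hJne : J.Nonempty) (hJc : J.OrdConnected)
    (a b r : ℝ → ℝ)
    (ha : ContDiffOn ℝ 2 a I) (hb : ContDiffOn ℝ 2 b I) (hr : ContDiffOn ℝ 2 r I)
    (hrpos : ∀ s ∈ I, 0 < r s) :
    ¬ MeanZero I J
      (fun s t => (a s + r s * exp (-s) * cos t, b s + r s * exp s * sin t, s)) :=
  no_minimal_cyclic_surfaces_horizontal_general I J hIo hIne hJo hJne a b r ha hb hr hrpos
end
end

section
/- Let I ⊆ ℝ be a nonempty open interval and let a : I → ℝ be twice differentiable. Then a satisfies the differential equation a''(s) − 2·a'(s)² − e^{2·a(s)} = 0 on I if and only if there exist λ, μ ∈ ℝ such that e^{−2·a(s)} = −s² + λ·s + μ for all s ∈ I, i.e. a(s) = −(1/2)·log(−s² + λ·s + μ) on I (where necessarily −s² + λ·s + μ > 0 on I). Equivalently, a solves the equation if and only if the function w(s) = e^{−2·a(s)} satisfies w''(s) = −2 on I. -/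
open Real Filter Topology

/-! With `w = e^{-2a}` one computes `w'' = e^{-2a} (4 a'² - 2 a'')`, and since `e^{-2a} > 0`
this equals `-2` exactly when `a'' - 2 a'² - e^{2a} = 0`. On an interval, `w'' = -2` integrates
twice to `w = -s² + λ s + μ`. -/

theorem hasDerivAt_deriv_exp_comp {f : ℝ → ℝ} {x : ℝ}
    (hf : ∀ᶠ y in 𝓝 x, DifferentiableAt ℝ f y) (hf' : DifferentiableAt ℝ (deriv f) x) :
    HasDerivAt (deriv fun y => exp (f y)) (exp (f x) * (deriv f x ^ 2 + deriv (deriv f) x)) x := by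
  have hderiv : deriv (fun y => exp (f y)) =ᶠ[𝓝 x] fun y => exp (f y) * deriv f y :=
    hf.mono fun y hy => deriv_exp hy
  refine ((hf.self_of_nhds.hasDerivAt.exp.mul hf'.hasDerivAt).congr_of_eventuallyEq hderiv)
    |>.congr_deriv ?_
  ring

theorem hasDerivAt_quadratic (c lam mu x : ℝ) :
    HasDerivAt (fun y => c / 2 * y ^ 2 + lam * y + mu) (c * x + lam) x := by
  refine ((((hasDerivAt_pow 2 x).const_mul (c / 2)).fun_add
    ((hasDerivAt_id' x).const_mul lam)).add_const mu).congr_deriv ?_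
  norm_num
  ring

theorem IsOpen.exists_eq_quadratic_of_deriv_deriv_eq {s : Set ℝ} {w : ℝ → ℝ} {c : ℝ}
    (hs : IsOpen s) (hs' : IsPreconnected s) (hw : DifferentiableOn ℝ w s)
    (hw' : DifferentiableOn ℝ (deriv w) s) (hw'' : ∀ x ∈ s, deriv (deriv w) x = c) :
    ∃ lam mu : ℝ, ∀ x ∈ s, w x = c / 2 * x ^ 2 + lam * x + mu := by
  obtain ⟨lam, hlam⟩ := hs.exists_eq_add_of_deriv_eq hs' hw' (differentiableOn_id.const_mul c)
    fun x hx => by simp [hw'' x hx]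
  obtain ⟨mu, hmu⟩ := hs.exists_eq_add_of_deriv_eq hs' hw
    (fun x _ => (hasDerivAt_quadratic c lam 0 x).differentiableAt.differentiableWithinAt)
    fun x hx => by rw [hlam hx, (hasDerivAt_quadratic c lam 0 x).deriv]; rfl
  exact ⟨lam, mu, fun x hx => by simpa using hmu hx⟩

theorem IsOpen.deriv_deriv_eq_of_eqOn_quadratic {s : Set ℝ} {w : ℝ → ℝ} {c lam mu x : ℝ}
    (hs : IsOpen s) (hw : ∀ y ∈ s, w y = c / 2 * y ^ 2 + lam * y + mu) (hx : x ∈ s) :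
    deriv (deriv w) x = c := by
  have hweq : w =ᶠ[𝓝 x] fun y => c / 2 * y ^ 2 + lam * y + mu :=
    eventually_of_mem (hs.mem_nhds hx) hw
  have hderiv : deriv w =ᶠ[𝓝 x] fun y => c * y + lam :=
    hweq.deriv.mono fun y hy => hy.trans (hasDerivAt_quadratic c lam mu y).deriv
  rw [hderiv.deriv_eq]
  exact (((hasDerivAt_id x).const_mul c).add_const lam).deriv.trans (mul_one c)

theorem IsOpen.deriv_deriv_eq_const_iff {s : Set ℝ} {w : ℝ → ℝ} {c : ℝ}
    (hs : IsOpen s) (hs' : IsPreconnected s) (hw : DifferentiableOn ℝ w s)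
    (hw' : DifferentiableOn ℝ (deriv w) s) :
    (∀ x ∈ s, deriv (deriv w) x = c) ↔
      ∃ lam mu : ℝ, ∀ x ∈ s, w x = c / 2 * x ^ 2 + lam * x + mu :=
  ⟨hs.exists_eq_quadratic_of_deriv_deriv_eq hs' hw hw',
    fun ⟨_, _, hq⟩ _ hx => hs.deriv_deriv_eq_of_eqOn_quadratic hq hx⟩

theorem ode_flat_horocycle_general
    (I : Set ℝ) (hIo : IsOpen I) (hIc : I.OrdConnected)
    (a : ℝ → ℝ)
    (ha1 : ∀ s ∈ I, DifferentiableAt ℝ a s)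
    (ha2 : ∀ s ∈ I, DifferentiableAt ℝ (deriv a) s) :
    ((∀ s ∈ I, deriv (deriv a) s - 2 * (deriv a s) ^ 2 - exp (2 * a s) = 0) ↔
      ∃ lam mu : ℝ, ∀ s ∈ I, exp (-(2 * a s)) = -s ^ 2 + lam * s + mu) ∧
    ((∀ s ∈ I, deriv (deriv a) s - 2 * (deriv a s) ^ 2 - exp (2 * a s) = 0) ↔
      ∀ s ∈ I, deriv (deriv (fun x => exp (-(2 * a x)))) s = -2) := by
  have hderiv : deriv (fun x => -(2 * a x)) = fun x => -(2 * deriv a x) := by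
    simp only [deriv.fun_neg', deriv_const_mul_field']
  have hw'' : ∀ s ∈ I, HasDerivAt (deriv fun x => exp (-(2 * a x)))
      (exp (-(2 * a s)) * ((-(2 * deriv a s)) ^ 2 + -(2 * deriv (deriv a) s))) s := by
    intro s hs
    have hf : ∀ᶠ y in 𝓝 s, DifferentiableAt ℝ (fun x => -(2 * a x)) y :=
      eventually_of_mem (hIo.mem_nhds hs) fun y hy => ((ha1 y hy).const_mul 2).neg
    have hf' : DifferentiableAt ℝ (deriv fun x => -(2 * a x)) s := by
      rw [hderiv]; exact ((ha2 s hs).const_mul 2).neg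
    simpa only [hderiv, deriv.fun_neg', deriv_const_mul_field'] using
      hasDerivAt_deriv_exp_comp hf hf'
  have hode : (∀ s ∈ I, deriv (deriv a) s - 2 * (deriv a s) ^ 2 - exp (2 * a s) = 0) ↔
      ∀ s ∈ I, deriv (deriv (fun x => exp (-(2 * a x)))) s = -2 := by
    refine forall₂_congr fun s hs => ?_
    have hscale : exp (-(2 * a s)) * ((-(2 * deriv a s)) ^ 2 + -(2 * deriv (deriv a) s)) + 2
        = -2 * exp (-(2 * a s)) *
            (deriv (deriv a) s - 2 * (deriv a s) ^ 2 - exp (2 * a s)) := by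
      rw [exp_neg]; field_simp; ring
    rw [(hw'' s hs).deriv, ← add_eq_zero_iff_eq_neg, hscale]
    simp [exp_ne_zero]
  refine ⟨hode.trans ?_, hode⟩
  rw [hIo.deriv_deriv_eq_const_iff (w := fun x => exp (-(2 * a x))) hIc.isPreconnected
    (fun s hs => ((ha1 s hs).const_mul 2).neg.exp.differentiableWithinAt)
    (fun s hs => (hw'' s hs).differentiableAt.differentiableWithinAt)]
  norm_num

/-- A twice differentiable function `a` on a nonempty open interval `I`
satisfies `a'' - 2·a'² - e^{2a} = 0` on `I` iff `e^{-2a(s)} = -s² + λs + μ` on `I`,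
equivalently iff `w = e^{-2a}` satisfies `w'' = -2` on `I`. -/
theorem ode_flat_horocycle
    (I : Set ℝ) (hIo : IsOpen I) (hIne : I.Nonempty) (hIc : I.OrdConnected)
    (a : ℝ → ℝ)
    (ha1 : ∀ s ∈ I, DifferentiableAt ℝ a s)
    (ha2 : ∀ s ∈ I, DifferentiableAt ℝ (deriv a) s) :
    ((∀ s ∈ I, deriv (deriv a) s - 2 * (deriv a s) ^ 2 - exp (2 * a s) = 0) ↔
      ∃ lam mu : ℝ, ∀ s ∈ I, exp (-(2 * a s)) = -s ^ 2 + lam * s + mu) ∧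
    ((∀ s ∈ I, deriv (deriv a) s - 2 * (deriv a s) ^ 2 - exp (2 * a s) = 0) ↔
      ∀ s ∈ I, deriv (deriv (fun x => exp (-(2 * a x)))) s = -2) :=
  ode_flat_horocycle_general I hIo hIc a ha1 ha2
end
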